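/- Let A ∈ R^{m×n} satisfy the r-RIP with constants δ_s ≤ δ_{2s} ≤ δ_{3s} < 1 for r = s, 2s, 3s. Let x* be s-sparse with support S*, let x_k ∈ R^n be s-sparse, let μ ∈ (0, 1/(1+δ_{2s})), and let y' ∈ R^m satisfy ‖y' - Ax*‖₂ ≤ c‖x_k - x*‖₂ for some c ≥ 0. Set u = H_s(x_k + μA^T(y' - Ax_k)). Then ‖u - x*‖₂ ≤ ρ‖x_k - x*‖₂ where ρ = 2(√2·max{μδ_{3s}, 1 - μ(1-δ_{2s})} + μ√(1+δ_{2s})·c). -/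

import Mathlib

/-!
Let `w = x_k + μ Aᵀ(y' - A x_k)` and `T = supp u ∪ supp x*`, so `#T ≤ 2s`. Since `u` keeps `s`
largest entries of `w`, the mass of `w` it drops on `supp x*` is at most the mass it keeps off
`supp x*`; hence `‖u - x*‖ ≤ 2 ‖(w - x*)|_T‖`. Now
`w - x* = (I - μ AᵀA)(x_k - x*) + μ Aᵀ(y' - A x*)`. Split `x_k - x*` into its parts on `T` and off
`T`: the quadratic form of `I - μ AᵀA` on `2s`-sparse vectors lies in `[0, 1 - μ(1 - δ₂ₛ)]`, the
Gram block of two disjoint supports of total size `3s` has norm at most `δ₃ₛ`, and the two parts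
together cost a factor `√2`. Finally `‖(Aᵀ r)|_T‖ ≤ √(1 + δ₂ₛ) ‖r‖` for `r = y' - A x*`.
-/

noncomputable def enorm2 {ι : Type*} [Fintype ι] (v : ι → ℝ) : ℝ := Real.sqrt (∑ i, v i ^ 2)

def Sparse {n : ℕ} (s : ℕ) (x : Fin n → ℝ) : Prop :=
  ∃ S : Finset (Fin n), S.card ≤ s ∧ ∀ i ∉ S, x i = 0

def RIP {m n : ℕ} (A : Matrix (Fin m) (Fin n) ℝ) (s : ℕ) (δ : ℝ) : Prop :=
  ∀ x : Fin n → ℝ, Sparse s x →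
    (1 - δ) * (enorm2 x)^2 ≤ (enorm2 (A.mulVec x))^2 ∧
      (enorm2 (A.mulVec x))^2 ≤ (1 + δ) * (enorm2 x)^2

def colSub {m n : ℕ} (A : Matrix (Fin m) (Fin n) ℝ) (S : Finset (Fin n)) :
    Matrix (Fin m) S ℝ := fun i j => A i (j : Fin n)


def IsHardThresh {n : ℕ} (s : ℕ) (v u : Fin n → ℝ) : Prop :=
  ∃ S : Finset (Fin n), S.card = s ∧ (∀ i ∈ S, u i = v i) ∧ (∀ i ∉ S, u i = 0) ∧
    ∀ i ∈ S, ∀ j ∉ S, |v j| ≤ |v i|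

open Finset Matrix

section EuclideanNorm

variable {ι : Type*} [Fintype ι]

lemma enorm2_eq_norm (v : ι → ℝ) : enorm2 v = ‖(WithLp.toLp 2 v : EuclideanSpace ℝ ι)‖ := by
  simp [enorm2, EuclideanSpace.norm_eq]

lemma enorm2_nonneg (v : ι → ℝ) : 0 ≤ enorm2 v := Real.sqrt_nonneg _

lemma enorm2_sq (v : ι → ℝ) : enorm2 v ^ 2 = v ⬝ᵥ v := by
  rw [enorm2, Real.sq_sqrt (by positivity)]
  simp [dotProduct, sq]

lemma enorm2_eq_zero {v : ι → ℝ} : enorm2 v = 0 ↔ v = 0 := by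
  simp [enorm2_eq_norm]

lemma enorm2_add_le (v w : ι → ℝ) : enorm2 (v + w) ≤ enorm2 v + enorm2 w := by
  simpa [enorm2_eq_norm] using
    norm_add_le (WithLp.toLp 2 v : EuclideanSpace ℝ ι) (WithLp.toLp 2 w)

lemma enorm2_smul (a : ℝ) (v : ι → ℝ) : enorm2 (a • v) = |a| * enorm2 v := by
  simp [enorm2_eq_norm, WithLp.toLp_smul, norm_smul]

lemma enorm2_neg (v : ι → ℝ) : enorm2 (-v) = enorm2 v := by
  simp [enorm2]

lemma enorm2_sub_le (v w : ι → ℝ) : enorm2 (v - w) ≤ enorm2 v + enorm2 w := by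
  simpa [sub_eq_add_neg, enorm2_neg] using enorm2_add_le v (-w)

lemma dotProduct_le_enorm2_mul_enorm2 (v w : ι → ℝ) : v ⬝ᵥ w ≤ enorm2 v * enorm2 w := by
  have := real_inner_le_norm (WithLp.toLp 2 v : EuclideanSpace ℝ ι) (WithLp.toLp 2 w)
  simpa [enorm2_eq_norm, EuclideanSpace.inner_eq_star_dotProduct, dotProduct_comm] using this

lemma enorm2_le_of_sq_le_mul {v : ι → ℝ} {K : ℝ} (hK : 0 ≤ K)
    (h : enorm2 v ^ 2 ≤ K * enorm2 v) : enorm2 v ≤ K := by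
  rcases (enorm2_nonneg v).eq_or_lt with hv | hv
  · rw [← hv]; exact hK
  · exact le_of_mul_le_mul_right (by rwa [← sq]) hv

lemma Set.indicator_dotProduct_indicator (s : Set ι) (v w : ι → ℝ) :
    s.indicator v ⬝ᵥ s.indicator w = s.indicator v ⬝ᵥ w := by
  classical
  exact sum_congr rfl fun i _ => by by_cases hi : i ∈ s <;> simp [hi]

lemma enorm2_indicator_sq (T : Finset ι) (v : ι → ℝ) :
    enorm2 ((T : Set ι).indicator v) ^ 2 = ∑ i ∈ T, v i ^ 2 := by
  rw [enorm2, Real.sq_sqrt (by positivity), ← sum_indicator_subset _ (subset_univ T)]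
  congr 1 with i
  by_cases hi : i ∈ T <;> simp [hi]

lemma enorm2_indicator_mono {S T : Finset ι} (h : S ⊆ T) (v : ι → ℝ) :
    enorm2 ((S : Set ι).indicator v) ≤ enorm2 ((T : Set ι).indicator v) := by
  refine (pow_le_pow_iff_left₀ (enorm2_nonneg _) (enorm2_nonneg _) two_ne_zero).1 ?_
  rw [enorm2_indicator_sq, enorm2_indicator_sq]
  exact sum_le_sum_of_subset_of_nonneg h fun i _ _ => sq_nonneg _

lemma enorm2_indicator_add_smul_le (s : Set ι) (v w : ι → ℝ) {a : ℝ} (ha : 0 ≤ a) :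
    enorm2 (s.indicator (v + a • w)) ≤ enorm2 (s.indicator v) + a * enorm2 (s.indicator w) := by
  rw [Set.indicator_add', show s.indicator (a • w) = a • s.indicator w from
    Set.indicator_const_smul s a w]
  exact (enorm2_add_le _ _).trans_eq (by rw [enorm2_smul, abs_of_nonneg ha])

lemma enorm2_indicator_add_enorm2_indicator_compl_le (T : Finset ι) (v : ι → ℝ) :
    enorm2 ((T : Set ι).indicator v) + enorm2 ((T : Set ι)ᶜ.indicator v) ≤ √2 * enorm2 v := by
  have hsum : enorm2 ((T : Set ι).indicator v) ^ 2 + enorm2 ((T : Set ι)ᶜ.indicator v) ^ 2 =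
      enorm2 v ^ 2 := by
    classical
    rw [← coe_compl, enorm2_indicator_sq, enorm2_indicator_sq, sum_add_sum_compl, enorm2,
      Real.sq_sqrt (by positivity)]
  refine (pow_le_pow_iff_left₀ (add_nonneg (enorm2_nonneg _) (enorm2_nonneg _))
    (mul_nonneg (Real.sqrt_nonneg _) (enorm2_nonneg _)) two_ne_zero).1 ?_
  rw [mul_pow, Real.sq_sqrt zero_le_two, ← hsum]
  nlinarith [sq_nonneg (enorm2 ((T : Set ι).indicator v) - enorm2 ((T : Set ι)ᶜ.indicator v))]

end EuclideanNorm

lemma Finset.sum_le_sum_of_card_le_of_forall_le {ι M : Type*} [AddCommMonoid M] [LinearOrder M]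
    [IsOrderedAddMonoid M] {P Q : Finset ι} {f : ι → M} (hcard : #P ≤ #Q)
    (hQ : ∀ i ∈ Q, 0 ≤ f i) (hle : ∀ j ∈ P, ∀ i ∈ Q, f j ≤ f i) :
    ∑ j ∈ P, f j ≤ ∑ i ∈ Q, f i := by
  rcases Q.eq_empty_or_nonempty with rfl | hQne
  · simp [card_eq_zero.1 (Nat.le_zero.1 hcard)]
  obtain ⟨i₀, hi₀, hmin⟩ := Q.exists_min_image f hQne
  calc ∑ j ∈ P, f j ≤ #P • f i₀ := sum_le_card_nsmul _ _ _ fun j hj => hle j hj i₀ hi₀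
    _ ≤ #Q • f i₀ := nsmul_le_nsmul_left (hQ i₀ hi₀) hcard
    _ ≤ ∑ i ∈ Q, f i := card_nsmul_le_sum _ _ _ hmin

section HardThresholding

variable {ι : Type*} [Fintype ι] [DecidableEq ι]

lemma enorm2_indicator_sdiff_le {U S : Finset ι} {w : ι → ℝ} (hcard : #S ≤ #U)
    (hmax : ∀ i ∈ U, ∀ j ∉ U, |w j| ≤ |w i|) :
    enorm2 ((↑(S \ U) : Set ι).indicator w) ≤ enorm2 ((↑(U \ S) : Set ι).indicator w) := by
  refine (pow_le_pow_iff_left₀ (enorm2_nonneg _) (enorm2_nonneg _) two_ne_zero).1 ?_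
  rw [enorm2_indicator_sq, enorm2_indicator_sq]
  refine sum_le_sum_of_card_le_of_forall_le (card_sdiff_le_card_sdiff_iff.2 hcard)
    (fun i _ => sq_nonneg _) fun j hj i hi => sq_le_sq.2 ?_
  exact hmax i (mem_sdiff.1 hi).1 j (mem_sdiff.1 hj).2

lemma enorm2_sub_le_two_mul_enorm2_indicator {U S : Finset ι} {w u x : ι → ℝ}
    (hcard : #S ≤ #U) (hUeq : ∀ i ∈ U, u i = w i) (hUzero : ∀ i ∉ U, u i = 0)
    (hmax : ∀ i ∈ U, ∀ j ∉ U, |w j| ≤ |w i|) (hx : ∀ i ∉ S, x i = 0) :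
    enorm2 (u - x) ≤ 2 * enorm2 ((↑(U ∪ S) : Set ι).indicator (w - x)) := by
  have hdecomp : u - x =
      (↑(U ∪ S) : Set ι).indicator (w - x) - (↑(S \ U) : Set ι).indicator w := by
    ext i
    by_cases hU : i ∈ U <;> by_cases hS : i ∈ S <;> simp [hU, hS, hUeq, hUzero, hx]
  have hUS : (↑(U \ S) : Set ι).indicator w = (↑(U \ S) : Set ι).indicator (w - x) :=
    Set.indicator_congr fun i hi => by simp [hx i (mem_sdiff.1 (mem_coe.1 hi)).2]
  have hmono : U \ S ⊆ U ∪ S := sdiff_subset.trans subset_union_left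
  have hdrop := enorm2_indicator_sdiff_le hcard hmax
  have hkeep := hUS ▸ enorm2_indicator_mono hmono (w - x)
  linarith [hdecomp ▸ enorm2_sub_le ((↑(U ∪ S) : Set ι).indicator (w - x))
    ((↑(S \ U) : Set ι).indicator w)]

end HardThresholding

lemma Matrix.isSymm_transpose_mul_self' {κ ι α : Type*} [Fintype κ] [CommSemiring α]
    (A : Matrix κ ι α) : (Aᵀ * A).IsSymm := by
  rw [IsSymm, transpose_mul, transpose_transpose]

section Polarization

variable {ι α : Type*} [Fintype ι]

lemma Matrix.IsSymm.dotProduct_mulVec_comm [CommSemiring α] {M : Matrix ι ι α} (hM : M.IsSymm)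
    (x y : ι → α) : y ⬝ᵥ M *ᵥ x = x ⬝ᵥ M *ᵥ y := by
  conv_rhs => rw [← hM.eq, ← vecMul_transpose, transpose_transpose]
  rw [dotProduct_mulVec, dotProduct_comm]

lemma Matrix.IsSymm.dotProduct_mulVec_le {M : Matrix ι ι ℝ} (hM : M.IsSymm) {T : Finset ι}
    {K : ℝ} (hK : ∀ z : ι → ℝ, (∀ i ∉ T, z i = 0) → |z ⬝ᵥ M *ᵥ z| ≤ K * enorm2 z ^ 2)
    {x y : ι → ℝ} (hx : ∀ i ∉ T, x i = 0) (hy : ∀ i ∉ T, y i = 0) :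
    x ⬝ᵥ M *ᵥ y ≤ K * enorm2 x * enorm2 y := by
  rcases (enorm2_nonneg x).eq_or_lt with hx0 | hx0
  · rw [← hx0, enorm2_eq_zero.1 hx0.symm]; simp
  rcases (enorm2_nonneg y).eq_or_lt with hy0 | hy0
  · rw [← hy0, enorm2_eq_zero.1 hy0.symm]; simp
  -- polarize at `‖y‖ • x ± ‖x‖ • y`, whose squared norms add up to `4 ‖x‖² ‖y‖²`
  set a := enorm2 y
  set b := enorm2 x
  have hquad : ∀ t : ℝ, (a • x + t • y) ⬝ᵥ M *ᵥ (a • x + t • y) =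
      a ^ 2 * (x ⬝ᵥ M *ᵥ x) + 2 * a * t * (x ⬝ᵥ M *ᵥ y) + t ^ 2 * (y ⬝ᵥ M *ᵥ y) := fun t => by
    simp only [mulVec_add, mulVec_smul, dotProduct_add, add_dotProduct, smul_dotProduct,
      dotProduct_smul, hM.dotProduct_mulVec_comm x y, smul_eq_mul]
    ring
  have hnorm : ∀ t : ℝ, enorm2 (a • x + t • y) ^ 2 =
      a ^ 2 * b ^ 2 + 2 * a * t * (x ⬝ᵥ y) + t ^ 2 * a ^ 2 := fun t => by
    rw [enorm2_sq]
    simp only [dotProduct_add, add_dotProduct, smul_dotProduct, dotProduct_smul, smul_eq_mul,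
      dotProduct_comm y x]
    rw [← enorm2_sq x, ← enorm2_sq y]
    ring
  have hsupp : ∀ t : ℝ, ∀ i ∉ T, (a • x + t • y) i = 0 := fun t i hi => by
    simp [hx i hi, hy i hi]
  have hp := (le_abs_self _).trans (hK _ (hsupp b))
  have hm := (neg_abs_le _).trans' (neg_le_neg (hK _ (hsupp (-b))))
  rw [hquad, hnorm] at hp hm
  have key : a * b * (x ⬝ᵥ M *ᵥ y) ≤ a * b * (K * b * a) := by nlinarith
  exact le_of_mul_le_mul_left key (mul_pos hy0 hx0)

end Polarization

section RIP

variable {m n k : ℕ} {A : Matrix (Fin m) (Fin n) ℝ} {δ : ℝ}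

lemma RIP.enorm2_mulVec_le (hRIP : RIP A k δ) {z : Fin n → ℝ} (hz : Sparse k z) :
    enorm2 (A *ᵥ z) ≤ √(1 + δ) * enorm2 z := by
  rw [← Real.sqrt_sq (enorm2_nonneg (A *ᵥ z)), ← Real.sqrt_sq (enorm2_nonneg z),
    ← Real.sqrt_mul' _ (sq_nonneg _)]
  exact Real.sqrt_le_sqrt (hRIP z hz).2

lemma RIP.enorm2_indicator_transpose_mulVec_le (hRIP : RIP A k δ) {T : Finset (Fin n)}
    (hT : #T ≤ k) (r : Fin m → ℝ) :
    enorm2 ((T : Set (Fin n)).indicator (Aᵀ *ᵥ r)) ≤ √(1 + δ) * enorm2 r := by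
  set z := (T : Set (Fin n)).indicator (Aᵀ *ᵥ r)
  have hz : Sparse k z := ⟨T, hT, fun i hi => Set.indicator_of_notMem (mem_coe.not.2 hi) _⟩
  refine enorm2_le_of_sq_le_mul (mul_nonneg (Real.sqrt_nonneg _) (enorm2_nonneg r)) ?_
  calc enorm2 z ^ 2 = A *ᵥ z ⬝ᵥ r := by
        rw [enorm2_sq, Set.indicator_dotProduct_indicator, dotProduct_transpose_mulVec,
          dotProduct_comm]
    _ ≤ enorm2 (A *ᵥ z) * enorm2 r := dotProduct_le_enorm2_mul_enorm2 _ _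
    _ ≤ √(1 + δ) * enorm2 z * enorm2 r := by
        gcongr
        · exact enorm2_nonneg r
        · exact hRIP.enorm2_mulVec_le hz
    _ = √(1 + δ) * enorm2 r * enorm2 z := by ring

lemma RIP.dotProduct_sub_mul_dotProduct_le (hRIP : RIP A k δ) {μ : ℝ} (hμ0 : 0 ≤ μ)
    (hμ : μ * (1 + δ) ≤ 1) {T : Finset (Fin n)} (hT : #T ≤ k) {x y : Fin n → ℝ}
    (hx : ∀ i ∉ T, x i = 0) (hy : ∀ i ∉ T, y i = 0) :
    x ⬝ᵥ y - μ * (A *ᵥ x ⬝ᵥ A *ᵥ y) ≤ (1 - μ * (1 - δ)) * enorm2 x * enorm2 y := by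
  have hB : ∀ x y : Fin n → ℝ,
      x ⬝ᵥ (1 - μ • (Aᵀ * A)) *ᵥ y = x ⬝ᵥ y - μ * (A *ᵥ x ⬝ᵥ A *ᵥ y) := fun x y => by
    rw [sub_mulVec, one_mulVec, smul_mulVec, ← mulVec_mulVec, dotProduct_sub, dotProduct_smul,
      dotProduct_transpose_mulVec, dotProduct_comm (A *ᵥ y), smul_eq_mul]
  rw [← hB]
  refine (isSymm_one.sub ((isSymm_transpose_mul_self' A).smul μ)).dotProduct_mulVec_le
    (fun z hz => ?_) hx hy
  obtain ⟨hlo, hhi⟩ := hRIP z ⟨T, hT, hz⟩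
  rw [hB, ← enorm2_sq, ← enorm2_sq, abs_le]
  constructor <;> nlinarith

lemma RIP.dotProduct_mulVec_le_of_disjoint (hRIP : RIP A k δ) {S S' : Finset (Fin n)}
    (hSS' : Disjoint S S') (hcard : #S + #S' ≤ k) {x y : Fin n → ℝ}
    (hx : ∀ i ∉ S, x i = 0) (hy : ∀ i ∉ S', y i = 0) :
    A *ᵥ x ⬝ᵥ A *ᵥ y ≤ δ * enorm2 x * enorm2 y := by
  have hB : ∀ x y : Fin n → ℝ, x ⬝ᵥ (Aᵀ * A - 1) *ᵥ y = A *ᵥ x ⬝ᵥ A *ᵥ y - x ⬝ᵥ y :=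
    fun x y => by
      rw [sub_mulVec, one_mulVec, ← mulVec_mulVec, dotProduct_sub, dotProduct_transpose_mulVec,
        dotProduct_comm (A *ᵥ y)]
  have hxy : x ⬝ᵥ y = 0 := sum_eq_zero fun i _ => by
    by_cases hi : i ∈ S
    · simp [hy i (disjoint_left.1 hSS' hi)]
    · simp [hx i hi]
  calc A *ᵥ x ⬝ᵥ A *ᵥ y = x ⬝ᵥ (Aᵀ * A - 1) *ᵥ y := by rw [hB, hxy, sub_zero]
    _ ≤ δ * enorm2 x * enorm2 y := by
      refine ((isSymm_transpose_mul_self' A).sub isSymm_one).dotProduct_mulVec_le (T := S ∪ S')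
        (fun z hz => ?_) (fun i hi => hx i (notMem_union.1 hi).1)
        (fun i hi => hy i (notMem_union.1 hi).2)
      obtain ⟨hlo, hhi⟩ := hRIP z ⟨S ∪ S', (card_union_le S S').trans hcard, hz⟩
      rw [hB, ← enorm2_sq, ← enorm2_sq, abs_le]
      constructor <;> linarith

lemma RIP.enorm2_indicator_sub_smul_transpose_mulVec_le {k' : ℕ} {δ' μ : ℝ}
    (hRIP : RIP A k δ) (hRIP' : RIP A k' δ') (hδ : 0 ≤ δ) (hμ0 : 0 ≤ μ) (hμ : μ * (1 + δ) ≤ 1)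
    {T V : Finset (Fin n)} (hT : #T ≤ k) (hTV : #T + #V ≤ k') {v : Fin n → ℝ}
    (hv : ∀ i ∉ T ∪ V, v i = 0) :
    enorm2 ((T : Set (Fin n)).indicator (v - μ • Aᵀ *ᵥ (A *ᵥ v))) ≤
      √2 * max (μ * δ') (1 - μ * (1 - δ)) * enorm2 v := by
  set z := (T : Set (Fin n)).indicator (v - μ • Aᵀ *ᵥ (A *ᵥ v))
  set p := (T : Set (Fin n)).indicator v
  set q := (T : Set (Fin n))ᶜ.indicator v
  set M := max (μ * δ') (1 - μ * (1 - δ))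
  have hM : 0 ≤ M := le_max_of_le_right (by nlinarith)
  have hz : ∀ i ∉ T, z i = 0 := fun i hi => Set.indicator_of_notMem (mem_coe.not.2 hi) _
  have hp : ∀ i ∉ T, p i = 0 := fun i hi => Set.indicator_of_notMem (mem_coe.not.2 hi) _
  have hq : ∀ i ∉ V \ T, (-q) i = 0 := fun i hi => by
    by_cases hiT : i ∈ T
    · simp [q, hiT]
    · simp [q, hiT, hv i (notMem_union.2 ⟨hiT, fun hiV => hi (mem_sdiff.2 ⟨hiV, hiT⟩)⟩)]
  have hzq : z ⬝ᵥ q = 0 := sum_eq_zero fun i _ => by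
    by_cases hiT : i ∈ T
    · simp [q, hiT]
    · simp [hz i hiT]
  have hsq : enorm2 z ^ 2 = (z ⬝ᵥ p - μ * (A *ᵥ z ⬝ᵥ A *ᵥ p)) + μ * (A *ᵥ z ⬝ᵥ A *ᵥ (-q)) := by
    have hzz : z ⬝ᵥ z = z ⬝ᵥ (v - μ • Aᵀ *ᵥ (A *ᵥ v)) := Set.indicator_dotProduct_indicator _ _ _
    have hpq : v = p + q := (Set.indicator_self_add_compl _ v).symm
    rw [enorm2_sq, hzz, dotProduct_sub, dotProduct_smul, dotProduct_transpose_mulVec,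
      dotProduct_comm (A *ᵥ v), smul_eq_mul, hpq, dotProduct_add, hzq, mulVec_add, mulVec_neg,
      dotProduct_add, dotProduct_neg]
    ring
  have hdiag := hRIP.dotProduct_sub_mul_dotProduct_le hμ0 hμ hT hz hp
  have hcross := hRIP'.dotProduct_mulVec_le_of_disjoint disjoint_sdiff
    ((add_le_add_right (card_le_card sdiff_subset) _).trans hTV) hz hq
  rw [enorm2_neg] at hcross
  refine enorm2_le_of_sq_le_mul
    (mul_nonneg (mul_nonneg (Real.sqrt_nonneg _) hM) (enorm2_nonneg v)) ?_
  calc enorm2 z ^ 2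
      ≤ (1 - μ * (1 - δ)) * enorm2 z * enorm2 p + μ * (δ' * enorm2 z * enorm2 q) := by
        rw [hsq]; gcongr
    _ ≤ M * enorm2 z * (enorm2 p + enorm2 q) := by
        have := enorm2_nonneg z
        nlinarith [le_max_left (μ * δ') (1 - μ * (1 - δ)), le_max_right (μ * δ') (1 - μ * (1 - δ)),
          mul_nonneg this (enorm2_nonneg p), mul_nonneg this (enorm2_nonneg q)]
    _ ≤ M * enorm2 z * (√2 * enorm2 v) := mul_le_mul_of_nonneg_left
        (enorm2_indicator_add_enorm2_indicator_compl_le T v) (mul_nonneg hM (enorm2_nonneg z))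
    _ = √2 * M * enorm2 v * enorm2 z := by ring

end RIP

theorem stmt14_general {m n s : ℕ} (A : Matrix (Fin m) (Fin n) ℝ)
    (δs δ2s δ3s : ℝ) (h0 : 0 ≤ δs) (h12 : δs ≤ δ2s)
    (hRIP2s : RIP A (2 * s) δ2s) (hRIP3s : RIP A (3 * s) δ3s)
    (xstar xk : Fin n → ℝ) (hxs : Sparse s xstar) (hxk : Sparse s xk)
    (μ : ℝ) (hμ : μ ∈ Set.Ioo (0:ℝ) (1 / (1 + δ2s)))
    (c : ℝ)
    (y' : Fin m → ℝ) (hres : enorm2 (y' - A.mulVec xstar) ≤ c * enorm2 (xk - xstar))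
    (u : Fin n → ℝ)
    (hu : IsHardThresh s
      (fun i => xk i + μ * A.transpose.mulVec (y' - A.mulVec xk) i) u) :
    enorm2 (u - xstar) ≤
      2 * (Real.sqrt 2 * max (μ * δ3s) (1 - μ * (1 - δ2s)) +
        μ * Real.sqrt (1 + δ2s) * c) * enorm2 (xk - xstar) := by
  obtain ⟨hμ0, hμ1⟩ := hμ
  have hμδ : μ * (1 + δ2s) ≤ 1 := ((lt_div_iff₀ (by linarith)).1 hμ1).le
  set w := fun i => xk i + μ * A.transpose.mulVec (y' - A.mulVec xk) i
  set v := xk - xstar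
  obtain ⟨U, hUcard, hUeq, hUzero, hUmax⟩ := hu
  obtain ⟨S, hScard, hS⟩ := hxs
  obtain ⟨S', hS'card, hS'⟩ := hxk
  set T := U ∪ S
  have hstep : w - xstar = (v - μ • Aᵀ *ᵥ (A *ᵥ v)) + μ • Aᵀ *ᵥ (y' - A *ᵥ xstar) := by
    ext i
    simp only [w, v, mulVec_sub, Pi.sub_apply, Pi.add_apply, Pi.smul_apply, smul_eq_mul]
    ring
  have hT : #T ≤ 2 * s := (card_union_le U S).trans (by omega)
  have hv : ∀ i ∉ T ∪ S', v i = 0 := fun i hi => by simp_all [v, T]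
  calc enorm2 (u - xstar) ≤ 2 * enorm2 ((T : Set (Fin n)).indicator (w - xstar)) :=
        enorm2_sub_le_two_mul_enorm2_indicator (by omega) hUeq hUzero hUmax hS
    _ ≤ 2 * (√2 * max (μ * δ3s) (1 - μ * (1 - δ2s)) * enorm2 v +
          μ * (√(1 + δ2s) * (c * enorm2 v))) := by
        rw [hstep]
        refine mul_le_mul_of_nonneg_left ((enorm2_indicator_add_smul_le _ _ _ hμ0.le).trans ?_)
          zero_le_two
        gcongr
        · exact hRIP2s.enorm2_indicator_sub_smul_transpose_mulVec_le hRIP3s (h0.trans h12)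
            hμ0.le hμδ hT (by omega) hv
        · exact (hRIP2s.enorm2_indicator_transpose_mulVec_le hT _).trans (by gcongr)
    _ = 2 * (√2 * max (μ * δ3s) (1 - μ * (1 - δ2s)) + μ * √(1 + δ2s) * c) * enorm2 v := by
        ring

/-- One HTP gradient step contracts:
`‖u - x*‖ ≤ ρ ‖x_k - x*‖` with `ρ = 2(√2 max{μδ₃ₛ, 1-μ(1-δ₂ₛ)} + μ√(1+δ₂ₛ) c)`. -/
theorem stmt14 {m n s : ℕ} (A : Matrix (Fin m) (Fin n) ℝ)
    (δs δ2s δ3s : ℝ) (h0 : 0 ≤ δs) (h12 : δs ≤ δ2s) (h23 : δ2s ≤ δ3s) (h3 : δ3s < 1)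
    (hRIPs : RIP A s δs) (hRIP2s : RIP A (2 * s) δ2s) (hRIP3s : RIP A (3 * s) δ3s)
    (xstar xk : Fin n → ℝ) (hxs : Sparse s xstar) (hxk : Sparse s xk)
    (μ : ℝ) (hμ : μ ∈ Set.Ioo (0:ℝ) (1 / (1 + δ2s)))
    (c : ℝ) (hc : 0 ≤ c)
    (y' : Fin m → ℝ) (hres : enorm2 (y' - A.mulVec xstar) ≤ c * enorm2 (xk - xstar))
    (u : Fin n → ℝ)
    (hu : IsHardThresh s
      (fun i => xk i + μ * A.transpose.mulVec (y' - A.mulVec xk) i) u) :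
    enorm2 (u - xstar) ≤
      2 * (Real.sqrt 2 * max (μ * δ3s) (1 - μ * (1 - δ2s)) +
        μ * Real.sqrt (1 + δ2s) * c) * enorm2 (xk - xstar) :=
  stmt14_general A δs δ2s δ3s h0 h12 hRIP2s hRIP3s xstar xk hxs hxk μ hμ c y' hres u hu
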